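/- Let F(u) = ∫₀^{u} exp(t²) dt, f(u) = 1 − 2·u·exp(−u²)·F(u), let u₀ be the unique zero of f in (0, ∞), fix q > 0, define h(y) = ∫₀^{y} f(q·η) dη, ĉ₁,crit = (1/q)·∫₀^{u₀} f(u) du, ȳ(ĉ₁) the unique y ∈ (0, u₀/q) with h(y) = ĉ₁, and Ā(ĉ₁) = ∫₀^{ȳ(ĉ₁)} y·h(y)/√(ĉ₁² − h(y)²) dy. Then ĉ₁/Ā(ĉ₁) → +∞ as ĉ₁ → 0⁺. -/

import Mathlib

open Real MeasureTheory intervalIntegral Set Filter Topology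

/-!
Near `0` the function `η ↦ f(qη)` stays above `1/2`, so on some `[0, d]` the primitive `h` grows
with slope at least `1/2`; and `f > 0` on `[0, u₀)` (since `f 0 = 1` and `u₀` is its only positive
zero), so `h` is nondecreasing on `[0, u₀/q)`. Hence for `ĉ₁ < d/2` the point `ȳ = ȳ(ĉ₁)` lies in
`[0, d]`, where `ĉ₁² − h(y)² = (ĉ₁ − h(y))(ĉ₁ + h(y)) ≥ (ȳ − y)ȳ/4`. The integrand of `Ā(ĉ₁)` is
then at most `2ĉ₁√ȳ / √(ȳ − y)`, whence `Ā(ĉ₁) ≤ 4ĉ₁ȳ ≤ 8ĉ₁²` (as `ȳ/2 ≤ h(ȳ) = ĉ₁`), and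
`ĉ₁/Ā(ĉ₁) ≥ 1/(8ĉ₁) → ∞`.
-/

/-- `F(u) = ∫₀^u exp(t²) dt`. -/
noncomputable def Ferf (u : ℝ) : ℝ := ∫ t in (0:ℝ)..u, Real.exp (t ^ 2)

/-- `f(u) = 1 - 2 u exp(-u²) F(u)`, the rescaled curvature function. -/
noncomputable def fker (u : ℝ) : ℝ := 1 - 2 * u * Real.exp (-(u ^ 2)) * Ferf u

lemma inv_sqrt_eq_rpow {x : ℝ} (hx : 0 ≤ x) : (√x)⁻¹ = x ^ (-(1 / 2 : ℝ)) := by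
  rw [Real.sqrt_eq_rpow, Real.rpow_neg hx]

lemma intervalIntegrable_inv_sqrt_sub {Y : ℝ} (hY : 0 ≤ Y) :
    IntervalIntegrable (fun y => (√(Y - y))⁻¹) volume 0 Y := by
  have hrpow : IntervalIntegrable (fun x : ℝ => x ^ (-(1 / 2 : ℝ))) volume 0 Y :=
    intervalIntegral.intervalIntegrable_rpow' (by norm_num)
  have hsqrt : IntervalIntegrable (fun x => (√x)⁻¹) volume 0 Y :=
    hrpow.congr fun x hx => (inv_sqrt_eq_rpow (by rw [uIoc_of_le hY] at hx; exact hx.1.le)).symm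
  simpa using (hsqrt.comp_sub_left Y).symm

lemma integral_inv_sqrt_sub {Y : ℝ} (hY : 0 ≤ Y) :
    ∫ y in (0:ℝ)..Y, (√(Y - y))⁻¹ = 2 * √Y := by
  rw [intervalIntegral.integral_comp_sub_left (fun x => (√x)⁻¹), sub_self, sub_zero,
    intervalIntegral.integral_congr (g := fun x : ℝ => x ^ (-(1 / 2 : ℝ)))
      fun x hx => inv_sqrt_eq_rpow (by rw [uIcc_of_le hY] at hx; exact hx.1),
    integral_rpow (Or.inl (by norm_num)), Real.zero_rpow (by norm_num), Real.sqrt_eq_rpow]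
  norm_num [div_eq_mul_inv, mul_comm]

section AreaIntegral

variable {h : ℝ → ℝ} {m c Y y : ℝ}

lemma area_integrand_pos (hm : 0 < m) (hy : y ∈ Ioo 0 Y) (hlow : m * y ≤ h y)
    (hhigh : m * (Y - y) ≤ c - h y) : 0 < y * h y / √(c ^ 2 - h y ^ 2) := by
  obtain ⟨hy0, hyY⟩ := hy
  have hhy : 0 < h y := by nlinarith
  have hgap : 0 < c - h y := by nlinarith
  exact div_pos (by positivity) (Real.sqrt_pos.2 (by nlinarith))

lemma area_integrand_le (hm : 0 < m) (hy : y ∈ Ioo 0 Y) (hlow : m * y ≤ h y)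
    (hhigh : m * (Y - y) ≤ c - h y) :
    y * h y / √(c ^ 2 - h y ^ 2) ≤ c * √Y / m * (√(Y - y))⁻¹ := by
  obtain ⟨hy0, hyY⟩ := hy
  have hY : 0 < Y := hy0.trans hyY
  have hhy : 0 ≤ h y := by nlinarith
  have hhc : h y ≤ c := by nlinarith
  have hc : 0 ≤ c := hhy.trans hhc
  have hsum : m * Y ≤ c + h y := by linarith
  have hden : m ^ 2 * Y * (Y - y) ≤ c ^ 2 - h y ^ 2 := by
    nlinarith [mul_le_mul hhigh hsum (by positivity) (by linarith)]
  have hsqrt : √(m ^ 2 * Y * (Y - y)) = m * √Y * √(Y - y) := by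
    rw [Real.sqrt_mul (by positivity), Real.sqrt_mul (by positivity), Real.sqrt_sq hm.le]
  calc y * h y / √(c ^ 2 - h y ^ 2)
      ≤ Y * c / √(m ^ 2 * Y * (Y - y)) := by
        gcongr
    _ = c * √Y / m * (√(Y - y))⁻¹ := by
        rw [hsqrt]
        field_simp
        rw [Real.sq_sqrt hY.le, mul_comm]

lemma area_integral_pos_and_le (hm : 0 < m) (hY : 0 < Y) (hcont : Continuous h)
    (hlow : ∀ y ∈ Icc 0 Y, m * y ≤ h y) (hhigh : ∀ y ∈ Icc 0 Y, m * (Y - y) ≤ c - h y) :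
    0 < ∫ y in (0:ℝ)..Y, y * h y / √(c ^ 2 - h y ^ 2) ∧
      ∫ y in (0:ℝ)..Y, y * h y / √(c ^ 2 - h y ^ 2) ≤ 2 * c ^ 2 / m ^ 2 := by
  have hbounds : ∀ y ∈ Ioo 0 Y, m * y ≤ h y ∧ m * (Y - y) ≤ c - h y := fun y hy =>
    ⟨hlow y (Ioo_subset_Icc_self hy), hhigh y (Ioo_subset_Icc_self hy)⟩
  have hmY : m * Y ≤ c := by
    have h0 := hlow 0 (left_mem_Icc.2 hY.le); have h1 := hhigh 0 (left_mem_Icc.2 hY.le)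
    linarith
  have hmajorant := (intervalIntegrable_inv_sqrt_sub hY.le).const_mul (c * √Y / m)
  have hint : IntervalIntegrable (fun y => y * h y / √(c ^ 2 - h y ^ 2)) volume 0 Y := by
    have hmeas : Measurable fun y => y * h y / √(c ^ 2 - h y ^ 2) :=
      (measurable_id.mul hcont.measurable).div
        ((hcont.measurable.pow_const 2).const_sub (c ^ 2)).sqrt
    rw [intervalIntegrable_iff_integrableOn_Ioo_of_le hY.le] at hmajorant ⊢
    refine hmajorant.mono' hmeas.aestronglyMeasurable
      (ae_restrict_of_forall_mem measurableSet_Ioo ?_)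
    intro y hy
    rw [Real.norm_of_nonneg (area_integrand_pos hm hy (hbounds y hy).1 (hbounds y hy).2).le]
    exact area_integrand_le hm hy (hbounds y hy).1 (hbounds y hy).2
  refine ⟨intervalIntegral.intervalIntegral_pos_of_pos_on hint
    (fun y hy => area_integrand_pos hm hy (hbounds y hy).1 (hbounds y hy).2) hY, ?_⟩
  calc ∫ y in (0:ℝ)..Y, y * h y / √(c ^ 2 - h y ^ 2)
      ≤ ∫ y in (0:ℝ)..Y, c * √Y / m * (√(Y - y))⁻¹ :=
        intervalIntegral.integral_mono_on_of_le_Ioo hY.le hint hmajorant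
          fun y hy => area_integrand_le hm hy (hbounds y hy).1 (hbounds y hy).2
    _ = 2 * c * Y / m := by
        rw [intervalIntegral.integral_const_mul, integral_inv_sqrt_sub hY.le]
        linear_combination (2 * c / m) * Real.mul_self_sqrt hY.le
    _ ≤ 2 * c ^ 2 / m ^ 2 := by
        have hc : 0 ≤ c := by nlinarith
        rw [div_le_div_iff₀ hm (by positivity)]
        nlinarith [mul_le_mul_of_nonneg_left hmY (by positivity : 0 ≤ 2 * c * m)]

end AreaIntegral

lemma pos_on_Ico_of_unique_pos_zero {g : ℝ → ℝ} {u₀ : ℝ} (hg : Continuous g) (hg0 : 0 < g 0)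
    (huniq : ∀ u, 0 < u → g u = 0 → u = u₀) : ∀ u ∈ Ico 0 u₀, 0 < g u := by
  rintro u ⟨hu0, hu⟩
  by_contra! hgu
  obtain ⟨v, hv, hgv⟩ := intermediate_value_Icc' hu0 hg.continuousOn ⟨hgu, hg0.le⟩
  have hv0 : 0 < v := hv.1.lt_of_ne (by rintro rfl; exact hg0.ne' hgv)
  exact (huniq v hv0 hgv ▸ hv.2).not_gt hu

lemma exists_mul_sub_le_integral {g : ℝ → ℝ} {m : ℝ} (hg : Continuous g) (hm : m < g 0) :
    ∃ d > 0, ∀ x y, 0 ≤ x → x ≤ y → y ≤ d → m * (y - x) ≤ ∫ t in x..y, g t := by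
  obtain ⟨ε, hε, hgε⟩ := Metric.eventually_nhds_iff.1 (hg.continuousAt.eventually (lt_mem_nhds hm))
  refine ⟨ε / 2, by positivity, fun x y hx hxy hy => ?_⟩
  have hconst : ∫ _ in x..y, m = m * (y - x) := by simp [mul_comm]
  rw [← hconst]
  refine intervalIntegral.integral_mono_on hxy intervalIntegrable_const (hg.intervalIntegrable _ _)
    fun t ht => (hgε ?_).le
  rw [Real.dist_0_eq_abs, abs_of_nonneg (hx.trans ht.1)]
  linarith [ht.2]

lemma le_of_integral_lt {g : ℝ → ℝ} {m d L Y : ℝ} (hg : Continuous g)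
    (hnn : ∀ t ∈ Ico 0 L, 0 ≤ g t) (hd : 0 ≤ d) (hmd : m * d ≤ ∫ t in 0..d, g t) (hYL : Y < L)
    (hY : ∫ t in 0..Y, g t < m * d) : Y ≤ d := by
  by_contra! hdY
  have hmono : ∫ t in 0..d, g t ≤ ∫ t in 0..Y, g t :=
    intervalIntegral.integral_mono_interval le_rfl hd hdY.le
      (ae_restrict_of_forall_mem measurableSet_Ioc fun t ht => hnn t ⟨ht.1.le, ht.2.trans_lt hYL⟩)
      (hg.intervalIntegrable _ _)
  linarith

lemma ferf_continuous : Continuous Ferf :=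
  intervalIntegral.continuous_primitive
    (fun _ _ => (by fun_prop : Continuous fun t : ℝ => exp (t ^ 2)).intervalIntegrable _ _) 0

lemma fker_continuous : Continuous fker := by
  have := ferf_continuous
  unfold fker
  fun_prop

lemma fker_zero : fker 0 = 1 := by
  simp [fker, Ferf]

theorem c1_over_area_tendsto_atTop_general
    (u₀ q : ℝ) (hu₀ : 0 < u₀)
    (huniq : ∀ u : ℝ, 0 < u → fker u = 0 → u = u₀)
    (hq : 0 < q)
    (h : ℝ → ℝ) (hh : ∀ y : ℝ, h y = ∫ η in (0:ℝ)..y, fker (q * η))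
    (ccrit : ℝ) (hccrit : ccrit = (1 / q) * ∫ u in (0:ℝ)..u₀, fker u)
    (ybar : ℝ → ℝ)
    (hybar : ∀ c1 ∈ Set.Ioo (0:ℝ) ccrit,
      ybar c1 ∈ Set.Ioo 0 (u₀ / q) ∧ h (ybar c1) = c1)
    (Abar : ℝ → ℝ)
    (hAbar : ∀ c1 ∈ Set.Ioo (0:ℝ) ccrit,
      Abar c1 = ∫ y in (0:ℝ)..(ybar c1), y * h y / Real.sqrt (c1 ^ 2 - (h y) ^ 2)) :
    Tendsto (fun c1 : ℝ => c1 / Abar c1) (𝓝[>] (0:ℝ)) atTop := by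
  have hfq : Continuous fun η => fker (q * η) := fker_continuous.comp (continuous_const_mul q)
  have hf_pos := pos_on_Ico_of_unique_pos_zero fker_continuous (by norm_num [fker_zero]) huniq
  have hfq_nonneg : ∀ t ∈ Ico 0 (u₀ / q), 0 ≤ fker (q * t) := fun t ht =>
    (hf_pos _ ⟨by nlinarith [ht.1], (lt_div_iff₀' hq).1 ht.2⟩).le
  have hh_cont : Continuous h := by
    rw [funext hh]
    exact intervalIntegral.continuous_primitive (fun _ _ => hfq.intervalIntegrable _ _) 0
  have hh_sub : ∀ x y, h y - h x = ∫ η in x..y, fker (q * η) := fun x y => by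
    rw [hh, hh, intervalIntegral.integral_interval_sub_left (hfq.intervalIntegrable _ _)
      (hfq.intervalIntegrable _ _)]
  have hccrit_pos : 0 < ccrit := hccrit ▸ mul_pos (by positivity)
    (intervalIntegral.intervalIntegral_pos_of_pos_on (fker_continuous.intervalIntegrable _ _)
      (fun u hu => hf_pos u (Ioo_subset_Ico_self hu)) hu₀)
  obtain ⟨d, hd, hslope⟩ := exists_mul_sub_le_integral hfq (m := 1 / 2) (by norm_num [fker_zero])
  have key : ∀ c1 ∈ Ioo 0 (min ccrit (d / 2)), 1 / 8 * c1⁻¹ ≤ c1 / Abar c1 := by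
    rintro c1 ⟨hc1, hc1_lt⟩
    have hmem : c1 ∈ Ioo 0 ccrit := ⟨hc1, hc1_lt.trans_le (min_le_left _ _)⟩
    obtain ⟨⟨hY0, hYL⟩, hYc⟩ := hybar c1 hmem
    have hYd : ybar c1 ≤ d := le_of_integral_lt hfq hfq_nonneg hd.le
      (by simpa using hslope 0 d le_rfl hd.le le_rfl) hYL
      (by rw [← hh, hYc]; linarith [min_le_right ccrit (d / 2)])
    obtain ⟨hA_pos, hA_le⟩ := area_integral_pos_and_le (m := 1 / 2) (by norm_num) hY0 hh_cont
      (fun y hy => by simpa [hh] using hslope 0 y le_rfl hy.1 (hy.2.trans hYd))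
      (fun y hy => by simpa only [← hh_sub, hYc] using hslope y _ hy.1 hy.2 hYd)
    rw [hAbar c1 hmem]
    calc 1 / 8 * c1⁻¹ = c1 / (2 * c1 ^ 2 / (1 / 2) ^ 2) := by field_simp; ring
      _ ≤ _ := by gcongr
  refine tendsto_atTop_mono' _ ?_
    (tendsto_inv_nhdsGT_zero.const_mul_atTop (by norm_num : (0:ℝ) < 1 / 8))
  filter_upwards [Ioo_mem_nhdsGT (lt_min hccrit_pos (half_pos hd))] with c1 hc1
  exact key c1 hc1

/-- `ĉ₁/Ā(ĉ₁) → +∞` as `ĉ₁ → 0⁺`. -/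
theorem c1_over_area_tendsto_atTop
    (u₀ q : ℝ) (hu₀ : 0 < u₀) (hfu₀ : fker u₀ = 0)
    (huniq : ∀ u : ℝ, 0 < u → fker u = 0 → u = u₀)
    (hq : 0 < q)
    (h : ℝ → ℝ) (hh : ∀ y : ℝ, h y = ∫ η in (0:ℝ)..y, fker (q * η))
    (ccrit : ℝ) (hccrit : ccrit = (1 / q) * ∫ u in (0:ℝ)..u₀, fker u)
    (ybar : ℝ → ℝ)
    (hybar : ∀ c1 ∈ Set.Ioo (0:ℝ) ccrit,
      ybar c1 ∈ Set.Ioo 0 (u₀ / q) ∧ h (ybar c1) = c1)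
    (Abar : ℝ → ℝ)
    (hAbar : ∀ c1 ∈ Set.Ioo (0:ℝ) ccrit,
      Abar c1 = ∫ y in (0:ℝ)..(ybar c1), y * h y / Real.sqrt (c1 ^ 2 - (h y) ^ 2)) :
    Tendsto (fun c1 : ℝ => c1 / Abar c1) (𝓝[>] (0:ℝ)) atTop :=
  c1_over_area_tendsto_atTop_general u₀ q hu₀ huniq hq h hh ccrit hccrit ybar hybar Abar hAbar
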